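/- arXiv:1703.02228 — 2 statements merged into one kernel-verified Lean document; each statement's English description precedes it below -/
import Mathlib

section
/- The shifted Hardy operator (I - H₁), where H₁f(x) = (1/x)∫₀ˣ f(y) dy, is a unitary operator on L²(0,∞). -/
open MeasureTheory Set
open Filter Topology

/-- The measure on `(0, ∞)`. -/
noncomputable def mu : Measure ℝ := volume.restrict (Set.Ioi (0:ℝ))

/-- A smooth function compactly supported in `(0, ∞)`. -/
def Nice (f : ℝ → ℝ) : Prop :=
  ContDiff ℝ (⊤ : ℕ∞) f ∧ HasCompactSupport f ∧ tsupport f ⊆ Set.Ioi 0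

/-- A continuous function compactly supported in `(0, ∞)`. -/
def Tame (f : ℝ → ℝ) : Prop :=
  Continuous f ∧ HasCompactSupport f ∧ tsupport f ⊆ Set.Ioi 0

lemma Nice.tame {f : ℝ → ℝ} (h : Nice f) : Tame f :=
  ⟨h.1.continuous, h.2.1, h.2.2⟩

/-- The shifted Hardy operator on functions. -/
noncomputable def Sop (f : ℝ → ℝ) : ℝ → ℝ :=
  fun x => f x - (1/x) * ∫ y in Ioo 0 x, f y

noncomputable def phi (g : ℝ → ℝ) : ℝ := ∫ y in Ioi (0:ℝ), g y / y

instance mu_fmc : IsFiniteMeasureOnCompacts mu :=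
  ⟨fun {_} hK => lt_of_le_of_lt (Measure.restrict_apply_le _ _) hK.measure_lt_top⟩

lemma Tame.zero_of_nonpos {f : ℝ → ℝ} (h : Tame f) {x : ℝ} (hx : x ≤ 0) : f x = 0 := by
  apply image_eq_zero_of_notMem_tsupport
  intro hmem
  exact absurd (h.2.2 hmem) (by simpa using hx)

lemma Tame.memLp {f : ℝ → ℝ} (h : Tame f) : MemLp f 2 mu :=
  h.1.memLp_of_hasCompactSupport h.2.1

lemma tame_zero : Tame (0 : ℝ → ℝ) := by
  refine ⟨continuous_const, ?_, ?_⟩ <;>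
    simp [HasCompactSupport, tsupport, Function.support]

lemma Tame.add {f g : ℝ → ℝ} (hf : Tame f) (hg : Tame g) : Tame (f + g) :=
  ⟨hf.1.add hg.1, hf.2.1.add hg.2.1,
    (closure_minimal (fun x hx => by
      by_contra hc
      simp only [mem_union, not_or] at hc
      have h1 : f x = 0 := image_eq_zero_of_notMem_tsupport (fun h => hc.1 (h))
      have h2 : g x = 0 := image_eq_zero_of_notMem_tsupport (fun h => hc.2 (h))
      simp only [Function.mem_support, Pi.add_apply, h1, h2, add_zero, ne_eq,
        not_true_eq_false] at hx
      : Function.support (f + g) ⊆ tsupport f ∪ tsupport g)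
      ((isClosed_tsupport f).union (isClosed_tsupport g))).trans
      (union_subset hf.2.2 hg.2.2)⟩

lemma Tame.smul {f : ℝ → ℝ} (c : ℝ) (hf : Tame f) : Tame (c • f) :=
  ⟨hf.1.const_smul c, hf.2.1.smul_left,
    (closure_minimal (fun x hx => subset_closure (by
      simp only [Function.mem_support, Pi.smul_apply, smul_eq_mul, ne_eq, mul_eq_zero,
        not_or] at hx
      exact hx.2)) (isClosed_tsupport f)).trans hf.2.2⟩


-- ===== infrastructure =====

lemma tame_bounds {f : ℝ → ℝ} (hf : Tame f) :
    ∃ a b : ℝ, 0 < a ∧ a < b ∧ ∀ x, x ∉ Ioo a b → f x = 0 := by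
  by_cases hne : (tsupport f).Nonempty
  · obtain ⟨m, hm⟩ := hf.2.1.exists_isLeast hne
    obtain ⟨M, hM⟩ := hf.2.1.exists_isGreatest hne
    have hm0 : 0 < m := hf.2.2 hm.1
    have hmM : m ≤ M := hM.2 hm.1
    refine ⟨m/2, M+1, by linarith, by linarith, fun x hx => ?_⟩
    apply image_eq_zero_of_notMem_tsupport
    intro hmem
    exact hx ⟨by linarith [hm.2 hmem], by linarith [hM.2 hmem]⟩
  · exact ⟨1, 2, one_pos, one_lt_two, fun x _ =>
      image_eq_zero_of_notMem_tsupport (fun h => hne ⟨x, h⟩)⟩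

lemma cont_smaf {f : ℝ → ℝ} (hc : Continuous f) (l : Filter ℝ) :
    StronglyMeasurableAtFilter f l volume :=
  ⟨univ, Filter.univ_mem, hc.aestronglyMeasurable.restrict⟩

noncomputable def prim (f : ℝ → ℝ) : ℝ → ℝ := fun x => ∫ t in (0:ℝ)..x, f t

lemma prim_eq_Ioo {f : ℝ → ℝ} (h0 : ∀ x ≤ (0:ℝ), f x = 0) (x : ℝ) :
    (∫ y in Ioo 0 x, f y) = prim f x := by
  rcases le_or_gt x 0 with hx | hx
  · rw [Ioo_eq_empty (by simpa using hx)]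
    rw [prim, intervalIntegral.integral_symm, intervalIntegral.integral_of_le hx,
      setIntegral_congr_fun measurableSet_Ioc (fun y hy => h0 y hy.2)]
    simp
  · rw [prim, intervalIntegral.integral_of_le hx.le, integral_Ioc_eq_integral_Ioo]

lemma prim_continuous {f : ℝ → ℝ} (hc : Continuous f) : Continuous (prim f) :=
  intervalIntegral.continuous_primitive (fun a b => hc.intervalIntegrable a b) 0

lemma prim_hasDerivAt {f : ℝ → ℝ} (hc : Continuous f) (x : ℝ) :
    HasDerivAt (prim f) (f x) x :=
  intervalIntegral.integral_hasDerivAt_right (hc.intervalIntegrable _ _)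
    (cont_smaf hc _) hc.continuousAt

lemma prim_zero_of_le {f : ℝ → ℝ} {a b : ℝ} (ha : 0 < a)
    (hsupp : ∀ x, x ∉ Ioo a b → f x = 0) {x : ℝ} (hx : x ≤ a) : prim f x = 0 := by
  rw [prim, intervalIntegral.integral_congr (g := fun _ => (0:ℝ))
    (fun y hy => hsupp y (fun hy2 => ?_))]
  · simp
  · rcases hy with ⟨h1, h2⟩
    have : y ≤ max 0 x := h2
    have : y ≤ a := le_trans this (max_le ha.le hx)
    exact absurd hy2.1 (not_lt.2 this)

lemma prim_const_of_ge {f : ℝ → ℝ} {a b : ℝ} (hsupp : ∀ x, x ∉ Ioo a b → f x = 0)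
    {x : ℝ} (hc : Continuous f) (hx : b ≤ x) : prim f x = prim f b := by
  have h1 : prim f x - prim f b = ∫ t in b..x, f t :=
    intervalIntegral.integral_interval_sub_left (hc.intervalIntegrable _ _)
      (hc.intervalIntegrable _ _)
  have h2 : (∫ t in b..x, f t) = 0 := by
    rw [intervalIntegral.integral_congr (g := fun _ => (0:ℝ))
      (fun y hy => hsupp y (fun hy2 => ?_))]
    · simp
    · rcases hy with ⟨h1', _⟩
      have : min b x ≤ y := h1'
      rw [min_eq_left hx] at this
      exact absurd hy2.2 (not_lt.2 this)
  linarith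

lemma Tame.integrable {f : ℝ → ℝ} (hf : Tame f) : Integrable f mu :=
  hf.1.integrable_of_hasCompactSupport hf.2.1

lemma prim_abs_le {f : ℝ → ℝ} (hf : Tame f) (x : ℝ) :
    |prim f x| ≤ ∫ y in Ioi (0:ℝ), |f y| := by
  have h0 : ∀ y ≤ (0:ℝ), f y = 0 := fun y hy => hf.zero_of_nonpos hy
  rw [← prim_eq_Ioo h0]
  have habs : Integrable (fun y => |f y|) mu := hf.integrable.abs
  calc |∫ y in Ioo 0 x, f y| ≤ ∫ y in Ioo 0 x, |f y| := by
        simpa using norm_integral_le_integral_norm (μ := volume.restrict (Ioo 0 x)) f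
    _ ≤ ∫ y in Ioi (0:ℝ), |f y| := by
        apply setIntegral_mono_set habs (Eventually.of_forall (fun y => abs_nonneg _))
        exact Eventually.of_forall (fun y hy => hy.1)

/-- injectivity of a.e. classes on tame functions -/
lemma tame_toLp_inj {f g : ℝ → ℝ} (hf : Tame f) (hg : Tame g)
    (h : f =ᵐ[mu] g) : f = g := by
  have hU : IsOpen ({x | f x ≠ g x} ∩ Ioi 0) :=
    ((isOpen_ne_fun hf.1 hg.1)).inter isOpen_Ioi
  have hnull : volume ({x | f x ≠ g x} ∩ Ioi 0) = 0 := by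
    have h1 : mu {x | f x ≠ g x} = 0 := h
    rw [mu, Measure.restrict_apply' measurableSet_Ioi] at h1
    exact h1
  have hempty : ({x | f x ≠ g x} ∩ Ioi 0) = ∅ := (hU.measure_eq_zero_iff _).1 hnull
  funext x
  rcases le_or_gt x 0 with hx | hx
  · rw [hf.zero_of_nonpos hx, hg.zero_of_nonpos hx]
  · by_contra hne
    exact (eq_empty_iff_forall_notMem.1 hempty x) ⟨hne, hx⟩


noncomputable def Hop (f : ℝ → ℝ) : ℝ → ℝ := fun x => (1/x) * prim f x

lemma Hop_zero_of_le {f : ℝ → ℝ} {a b : ℝ} (ha : 0 < a)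
    (hsupp : ∀ x, x ∉ Ioo a b → f x = 0) {x : ℝ} (hx : x ≤ a) : Hop f x = 0 := by
  rw [Hop, prim_zero_of_le ha hsupp hx, mul_zero]

lemma Hop_cont {f : ℝ → ℝ} (hf : Tame f) {a b : ℝ} (ha : 0 < a)
    (hsupp : ∀ x, x ∉ Ioo a b → f x = 0) : Continuous (Hop f) := by
  rw [continuous_iff_continuousAt]
  intro x
  rcases lt_or_ge x a with hx | hx
  · apply continuousAt_const.congr
    apply Filter.eventuallyEq_of_mem (Iio_mem_nhds hx)
    intro y hy
    exact (Hop_zero_of_le ha hsupp (le_of_lt hy)).symm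
  · have hx0 : 0 < x := lt_of_lt_of_le ha hx
    exact ((continuousAt_const.div continuousAt_id hx0.ne').mul
      (prim_continuous hf.1).continuousAt)

lemma Hop_sq_int {f : ℝ → ℝ} (hf : Tame f) {a b : ℝ} (ha : 0 < a) (hab : a < b)
    (hsupp : ∀ x, x ∉ Ioo a b → f x = 0) :
    Integrable (fun x => (Hop f x)^2) mu := by
  have hb0 : 0 < b := ha.trans hab
  set M := ∫ y in Ioi (0:ℝ), |f y| with hM
  have hcont : Continuous (Hop f) := Hop_cont hf ha hsupp
  show IntegrableOn _ (Ioi (0:ℝ)) volume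
  rw [← Ioc_union_Ioi_eq_Ioi hb0.le]
  apply IntegrableOn.union
  · exact ((hcont.pow 2).continuousOn.integrableOn_compact isCompact_Icc).mono_set
      Ioc_subset_Icc_self
  · have hint : IntegrableOn (fun x : ℝ => M^2 * x ^ (-2:ℝ)) (Ioi b) :=
      (integrableOn_Ioi_rpow_of_lt (by norm_num) hb0).const_mul _
    apply Integrable.mono' hint ((hcont.pow 2).aestronglyMeasurable.restrict)
    rw [ae_restrict_iff' measurableSet_Ioi]
    apply Eventually.of_forall
    intro x hx
    have hx0 : (0:ℝ) < x := hb0.trans hx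
    have hp : (prim f x)^2 ≤ M^2 := by
      have h1 : |prim f x| ≤ M := prim_abs_le hf x
      nlinarith [abs_nonneg (prim f x), sq_abs (prim f x)]
    have hrw : x ^ (-2:ℝ) = (x^2)⁻¹ := by
      rw [show (-2:ℝ) = -(2:ℕ) by norm_num, Real.rpow_neg hx0.le, Real.rpow_natCast]
    rw [Real.norm_eq_abs, abs_of_nonneg (sq_nonneg _), hrw, Pi.pow_apply, Hop]
    rw [div_mul_eq_mul_div, one_mul, div_pow]
    rw [div_le_iff₀ (by positivity)]
    calc prim f x ^ 2 ≤ M^2 := hp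
      _ = M ^2 * (x^2)⁻¹ * x^2 := by field_simp

lemma Sop_eq {f : ℝ → ℝ} (h0 : ∀ x ≤ (0:ℝ), f x = 0) :
    Sop f = fun x => f x - Hop f x :=
  funext fun x => by rw [Sop, prim_eq_Ioo h0]; rfl

/-- Membership of the transformed function. -/
lemma Tame.memTop {f : ℝ → ℝ} (hf : Tame f) : MemLp (Sop f) 2 mu := by
  obtain ⟨a, b, ha, hab, hsupp⟩ := tame_bounds hf
  have h0 : ∀ x ≤ (0:ℝ), f x = 0 := fun x hx => hf.zero_of_nonpos hx
  have hH : MemLp (Hop f) 2 mu := by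
    rw [memLp_two_iff_integrable_sq (Hop_cont hf ha hsupp).aestronglyMeasurable]
    exact Hop_sq_int hf ha hab hsupp
  rw [Sop_eq h0]
  exact hf.memLp.sub hH

lemma Sop_add {f g : ℝ → ℝ} (hf : Tame f) (hg : Tame g) :
    Sop (f + g) = Sop f + Sop g := by
  funext x
  simp only [Sop, Pi.add_apply]
  rw [integral_add ((hf.1.continuousOn.integrableOn_compact isCompact_Icc).mono_set Ioo_subset_Icc_self)
    ((hg.1.continuousOn.integrableOn_compact isCompact_Icc).mono_set Ioo_subset_Icc_self)]
  ring

lemma Sop_smul {f : ℝ → ℝ} (c : ℝ) (hf : Tame f) :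
    Sop (c • f) = c • Sop f := by
  funext x
  simp only [Sop, Pi.smul_apply, smul_eq_mul]
  rw [MeasureTheory.integral_const_mul]
  ring

/-- The key isometry identity. -/
lemma top_isometry {f : ℝ → ℝ} (hf : Tame f) :
    ∫ x in Ioi (0:ℝ), (Sop f x)^2 = ∫ x in Ioi (0:ℝ), (f x)^2 := by
  obtain ⟨a, b, ha, hab, hsupp⟩ := tame_bounds hf
  have h0 : ∀ x ≤ (0:ℝ), f x = 0 := fun x hx => hf.zero_of_nonpos hx
  have hb0 : 0 < b := ha.trans hab
  have hcont_h : Continuous (Hop f) := Hop_cont hf ha hsupp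
  have int_h2 : Integrable (fun x => Hop f x^2) (volume.restrict (Ioi (0:ℝ))) := Hop_sq_int hf ha hab hsupp
  have int_f2 : Integrable (fun x => f x^2) (volume.restrict (Ioi (0:ℝ))) :=
    (memLp_two_iff_integrable_sq hf.1.aestronglyMeasurable).1 hf.memLp
  have int_fh : Integrable (fun x => f x * Hop f x) (volume.restrict (Ioi (0:ℝ))) := by
    have : HasCompactSupport (f * Hop f) := hf.2.1.mul_right
    exact (hf.1.mul hcont_h).integrable_of_hasCompactSupport this
  -- key identity
  have key : ∫ x in Ioi (0:ℝ), Hop f x^2 = ∫ x in Ioi (0:ℝ), 2*(f x * Hop f x) := by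
    have hPa : prim f a = 0 := prim_zero_of_le ha hsupp le_rfl
    have hder : ∀ x ∈ Ici a, HasDerivAt (fun t => -(prim f t)^2 / t)
        (Hop f x^2 - 2*(f x * Hop f x)) x := by
      intro x hx
      have hx0 : 0 < x := lt_of_lt_of_le ha hx
      have hd1 : HasDerivAt (fun t => -(prim f t)^2) (-(2 * prim f x ^ 1 * f x)) x :=
        ((prim_hasDerivAt hf.1 x).pow 2).neg
      have hd2 := hd1.div (hasDerivAt_id x) hx0.ne'
      refine hd2.congr_deriv ?_
      have : Hop f x = (1/x) * prim f x := rfl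
      rw [this]
      simp only [id]
      field_simp
      ring
    have hint : IntegrableOn (fun x => Hop f x^2 - 2*(f x*Hop f x)) (Ioi a) := by
      have h1 : IntegrableOn (fun x => Hop f x^2 - 2*(f x*Hop f x)) (Ioi 0) :=
        int_h2.sub (int_fh.const_mul 2)
      exact IntegrableOn.mono_set h1 (Ioi_subset_Ioi ha.le)
    have htend : Tendsto (fun t => -(prim f t)^2 / t) atTop (𝓝 0) := by
      have h1 : (fun t : ℝ => -(prim f b)^2 * t⁻¹) =ᶠ[atTop] (fun t => -(prim f t)^2 / t) := by
        filter_upwards [eventually_ge_atTop b] with t ht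
        rw [prim_const_of_ge hsupp hf.1 ht]
        ring
      have h2 : Tendsto (fun t : ℝ => -(prim f b)^2 * t⁻¹) atTop (𝓝 (-(prim f b)^2 * 0)) :=
        tendsto_inv_atTop_zero.const_mul _
      rw [mul_zero] at h2
      exact h2.congr' h1
    have hFTC := integral_Ioi_of_hasDerivAt_of_tendsto' hder hint htend
    rw [hPa] at hFTC
    norm_num at hFTC
    have hsplit_zero : ∀ g : ℝ → ℝ, (∀ x ∈ Ioc (0:ℝ) a, g x = 0) →
        Integrable g (volume.restrict (Ioi (0:ℝ))) → ∫ x in Ioi (0:ℝ), g x = ∫ x in Ioi a, g x := by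
      intro g hg hgint
      have hu : Ioc (0:ℝ) a ∪ Ioi a = Ioi 0 := Ioc_union_Ioi_eq_Ioi ha.le
      rw [← hu, setIntegral_union (Ioc_disjoint_Ioi le_rfl) measurableSet_Ioi
        (IntegrableOn.mono_set hgint (by rw [← hu]; exact subset_union_left))
        (IntegrableOn.mono_set hgint (by rw [← hu]; exact subset_union_right))]
      rw [setIntegral_congr_fun measurableSet_Ioc hg]
      simp
    have hz1 : ∀ x ∈ Ioc (0:ℝ) a, Hop f x^2 = 0 := by
      intro x hx
      rw [Hop_zero_of_le ha hsupp hx.2]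
      ring
    have hz2 : ∀ x ∈ Ioc (0:ℝ) a, 2*(f x * Hop f x) = 0 := by
      intro x hx
      have : f x = 0 := hsupp x (fun hx2 => absurd hx2.1 (not_lt.2 hx.2))
      rw [this]
      ring
    rw [hsplit_zero _ hz1 int_h2, hsplit_zero _ hz2 (int_fh.const_mul 2)]
    have h5 : ∫ x in Ioi a, (Hop f x^2 - 2*(f x*Hop f x)) =
        (∫ x in Ioi a, Hop f x^2) - ∫ x in Ioi a, 2*(f x*Hop f x) := by
      apply integral_sub
      · exact IntegrableOn.mono_set int_h2 (Ioi_subset_Ioi ha.le)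
      · exact IntegrableOn.mono_set (int_fh.const_mul 2) (Ioi_subset_Ioi ha.le)
    rw [hFTC] at h5
    linarith
  -- expansion
  have e1 : ∀ x, (Sop f x)^2 = f x^2 - (2*(f x * Hop f x) - Hop f x^2) := by
    intro x
    rw [Sop_eq h0]
    ring
  have int_mid : Integrable (fun x => 2*(f x * Hop f x) - Hop f x^2) (volume.restrict (Ioi (0:ℝ))) :=
    (int_fh.const_mul 2).sub int_h2
  rw [integral_congr_ae (Eventually.of_forall e1)]
  rw [integral_sub int_f2 int_mid]
  rw [integral_sub (int_fh.const_mul 2) int_h2]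
  rw [← key]
  ring


lemma norm_toLp_sq {f : ℝ → ℝ} (hf : MemLp f 2 mu) :
    ‖hf.toLp f‖^2 = ∫ x in Ioi (0:ℝ), (f x)^2 := by
  have h1 : (inner ℝ (hf.toLp f) (hf.toLp f) : ℝ) = ‖hf.toLp f‖^2 :=
    real_inner_self_eq_norm_sq _
  rw [← h1, L2.inner_def]
  have h2 : ∀ᵐ x ∂mu, (inner ℝ ((hf.toLp f : Lp ℝ 2 mu) x) ((hf.toLp f : Lp ℝ 2 mu) x) : ℝ)
      = (f x)^2 := by
    filter_upwards [hf.coeFn_toLp] with x hx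
    rw [hx]
    simp [sq]
  exact integral_congr_ae h2


lemma tame_of_zero_off {f : ℝ → ℝ} (hc : Continuous f) {a b : ℝ} (ha : 0 < a)
    (h : ∀ x, x ∉ Ioo a b → f x = 0) : Tame f := by
  refine ⟨hc, HasCompactSupport.intro isCompact_Icc
    (fun x hx => h x (fun h2 => hx ⟨h2.1.le, h2.2.le⟩)), ?_⟩
  have hsub : Function.support f ⊆ Icc a b := by
    intro x hx
    by_contra h2
    exact hx (h x (fun h3 => h2 ⟨h3.1.le, h3.2.le⟩))
  exact (closure_minimal hsub isClosed_Icc).trans (fun y hy => lt_of_lt_of_le ha hy.1)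

lemma Tame.div_id {g : ℝ → ℝ} (hg : Tame g) : Tame (fun y => g y / y) := by
  obtain ⟨a, b, ha, hab, hsupp⟩ := tame_bounds hg
  have hwzero : ∀ y, y ∉ Ioo a b → g y / y = 0 := fun y hy => by rw [hsupp y hy, zero_div]
  have hwcont : Continuous (fun y => g y / y) := by
    rw [continuous_iff_continuousAt]
    intro x
    rcases lt_or_ge x a with hx | hx
    · apply continuousAt_const.congr
      apply Filter.eventuallyEq_of_mem (Iio_mem_nhds hx)
      intro y hy
      exact (hwzero y (fun h2 => absurd h2.1 (not_lt.2 (le_of_lt hy)))).symm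
    · have hx0 : 0 < x := lt_of_lt_of_le ha hx
      exact hg.1.continuousAt.div continuousAt_id hx0.ne'
  exact tame_of_zero_off hwcont ha hwzero

lemma phi_add_smul {g u : ℝ → ℝ} (hg : Tame g) (hu : Tame u) (c : ℝ) :
    phi (g + c • u) = phi g + c * phi u := by
  have i1 : Integrable (fun y => g y / y) (volume.restrict (Ioi (0:ℝ))) :=
    hg.div_id.integrable
  have i2 : Integrable (fun y => c * (u y / y)) (volume.restrict (Ioi (0:ℝ))) :=
    hu.div_id.integrable.const_mul c
  have h1 : ∀ y : ℝ, ((g + c • u) y) / y = g y / y + c * (u y / y) := by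
    intro y
    simp only [Pi.add_apply, Pi.smul_apply, smul_eq_mul]
    ring
  rw [phi, phi, phi]
  rw [integral_congr_ae (Eventually.of_forall h1), integral_add i1 i2,
    MeasureTheory.integral_const_mul]

lemma scale_int (G : ℝ → ℝ) {δ : ℝ} (hδ : 0 < δ) :
    ∫ x in Ioi (0:ℝ), G (x / δ) = δ * ∫ x in Ioi (0:ℝ), G x := by
  have h := integral_comp_mul_right_Ioi G 0 (inv_pos.2 hδ)
  simp only [zero_mul, smul_eq_mul, inv_inv] at h
  simp only [div_eq_mul_inv]
  exact h

/-- Approximation by tame functions. -/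
lemma dense_tame (F : Lp ℝ 2 mu) {ε : ℝ} (hε : 0 < ε) :
    ∃ (g : ℝ → ℝ) (hg : Tame g), ‖F - hg.memLp.toLp g‖ < ε := by
  have hFm : MemLp (F : ℝ → ℝ) 2 mu := Lp.memLp F
  set f₁ : ℝ → ℝ := hFm.aestronglyMeasurable.mk _ with hf₁
  have hsm : StronglyMeasurable f₁ := hFm.aestronglyMeasurable.stronglyMeasurable_mk
  have hae : (F : ℝ → ℝ) =ᵐ[mu] f₁ := hFm.aestronglyMeasurable.ae_eq_mk
  set ft : ℝ → ℝ := (Ioi (0:ℝ)).indicator f₁ with hft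
  have haeft : (F : ℝ → ℝ) =ᵐ[mu] ft := by
    refine hae.trans ?_
    have h1 : ∀ᵐ x ∂mu, x ∈ Ioi (0:ℝ) := ae_restrict_mem measurableSet_Ioi
    filter_upwards [h1] with x hx
    rw [hft, indicator_of_mem hx]
  have hftmem : MemLp ft 2 volume := by
    constructor
    · exact (hsm.indicator measurableSet_Ioi).aestronglyMeasurable
    · rw [hft, eLpNorm_indicator_eq_eLpNorm_restrict measurableSet_Ioi]
      have : eLpNorm f₁ 2 (volume.restrict (Ioi 0)) = eLpNorm (F : ℝ → ℝ) 2 mu :=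
        eLpNorm_congr_ae hae.symm
      rw [this]
      exact hFm.2
  obtain ⟨g₁, hg₁supp, hg₁close, hg₁cont, _⟩ :=
    hftmem.exists_hasCompactSupport_eLpNorm_sub_le (by norm_num : (2:ENNReal) ≠ ⊤)
      (ε := ENNReal.ofReal (ε/4)) (ENNReal.ofReal_pos.2 (by linarith)).ne'
  -- sup bound for g₁
  obtain ⟨C, hC⟩ := hg₁supp.exists_bound_of_continuousOn hg₁cont.continuousOn
  set C' : ℝ := max C 0 with hC'
  have hC'0 : 0 ≤ C' := le_max_right _ _
  have hCb : ∀ x, |g₁ x| ≤ C' := by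
    intro x
    by_cases hx : x ∈ tsupport g₁
    · exact le_trans (by simpa using hC x hx) (le_max_left _ _)
    · rw [image_eq_zero_of_notMem_tsupport hx]
      simpa using hC'0
  -- cutoff
  set δ : ℝ := min 1 ((ε/4)^2 / (2*(C'^2+1))) with hδdef
  have hδ0 : 0 < δ := lt_min one_pos (by positivity)
  set χ : ℝ → ℝ := fun x => min 1 (max 0 ((x - δ)/δ)) with hχ
  have hχcont : Continuous χ :=
    continuous_const.min (continuous_const.max ((continuous_id.sub continuous_const).div_const δ))
  have hχ0 : ∀ x, 0 ≤ χ x := fun x => le_min zero_le_one (le_max_left _ _)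
  have hχ1 : ∀ x, χ x ≤ 1 := fun x => min_le_left _ _
  have hχze : ∀ x, x ≤ δ → χ x = 0 := by
    intro x hx
    rw [hχ]
    simp only []
    rw [max_eq_left (div_nonpos_iff.2 (Or.inr ⟨by linarith, hδ0.le⟩))]
    exact min_eq_right zero_le_one
  have hχone : ∀ x, 2*δ ≤ x → χ x = 1 := by
    intro x hx
    apply min_eq_left
    refine le_trans ?_ (le_max_right _ _)
    rw [le_div_iff₀ hδ0]
    linarith
  set g : ℝ → ℝ := fun x => g₁ x * χ x with hgdef
  have hgcont : Continuous g := hg₁cont.mul hχcont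
  have hgtame : Tame g := by
    refine ⟨hgcont, ?_, ?_⟩
    · have h1 : HasCompactSupport (g₁ * χ) := hg₁supp.mul_right
      exact h1
    · have hsub : Function.support g ⊆ Ici δ := by
        intro x hx
        rw [mem_Ici]
        by_contra h2
        push_neg at h2
        apply hx
        rw [hgdef]
        simp only []
        rw [hχze x h2.le, mul_zero]
      exact (closure_minimal hsub isClosed_Ici).trans (fun y hy => lt_of_lt_of_le hδ0 hy)
  have hg₁mu : MemLp g₁ 2 mu := hg₁cont.memLp_of_hasCompactSupport hg₁supp
  refine ⟨g, hgtame, ?_⟩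
  -- first piece
  have hterm1 : ‖F - hg₁mu.toLp g₁‖ ≤ ε/4 := by
    have h1 : F - hg₁mu.toLp g₁ = ((Lp.memLp F).sub hg₁mu).toLp ((F : ℝ → ℝ) - g₁) := by
      rw [MemLp.toLp_sub (Lp.memLp F) hg₁mu, Lp.toLp_coeFn]
    rw [h1, Lp.norm_toLp]
    apply ENNReal.toReal_le_of_le_ofReal (by linarith)
    have h2 : eLpNorm ((F : ℝ → ℝ) - g₁) 2 mu = eLpNorm (ft - g₁) 2 mu :=
      eLpNorm_congr_ae (haeft.sub (Filter.EventuallyEq.refl _ _))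
    rw [h2]
    exact le_trans (eLpNorm_mono_measure _ Measure.restrict_le_self) hg₁close
  -- second piece
  have hgmu : MemLp g 2 mu := hgtame.memLp
  have hterm2 : ‖(hg₁mu.toLp g₁ : Lp ℝ 2 mu) - hgmu.toLp g‖ ≤ ε/4 := by
    have h1 : (hg₁mu.toLp g₁ : Lp ℝ 2 mu) - hgmu.toLp g = (hg₁mu.sub hgmu).toLp (g₁ - g) := by
      rw [MemLp.toLp_sub]
    have hsq : ‖(hg₁mu.sub hgmu).toLp (g₁ - g)‖^2 ≤ (ε/4)^2 := by
      rw [norm_toLp_sq]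
      have hint1 : Integrable (fun x => (g₁ x - g x)^2) (volume.restrict (Ioi (0:ℝ))) :=
        (memLp_two_iff_integrable_sq ((hg₁cont.sub hgcont).aestronglyMeasurable)).1
          (hg₁mu.sub hgmu)
      have hint2 : Integrable (fun x => (Ioc (0:ℝ) (2*δ)).indicator (fun _ => C'^2) x)
          (volume.restrict (Ioi (0:ℝ))) := by
        rw [integrable_indicator_iff measurableSet_Ioc]
        exact integrableOn_const (lt_of_le_of_lt (Measure.restrict_apply_le _ _) measure_Ioc_lt_top).ne
      have hptw : ∀ x ∈ Ioi (0:ℝ), (g₁ x - g x)^2 ≤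
          (Ioc (0:ℝ) (2*δ)).indicator (fun _ => C'^2) x := by
        intro x hx
        rcases le_or_gt x (2*δ) with hx2 | hx2
        · rw [Set.indicator_of_mem (mem_Ioc.mpr ⟨hx, hx2⟩)]
          have h3 : g₁ x - g x = g₁ x * (1 - χ x) := by rw [hgdef]; ring
          rw [h3]
          have h4 := hCb x
          have h5 := hχ0 x
          have h6 := hχ1 x
          have h7 : |g₁ x * (1 - χ x)| ≤ C' := by
            rw [abs_mul]
            calc |g₁ x| * |1 - χ x| ≤ C' * 1 := by
                  apply mul_le_mul h4 (by rw [abs_of_nonneg (by linarith)]; linarith)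
                    (abs_nonneg _) hC'0
              _ = C' := mul_one _
          calc (g₁ x * (1 - χ x))^2 = |g₁ x * (1 - χ x)|^2 := (sq_abs _).symm
            _ ≤ C'^2 := by nlinarith [abs_nonneg (g₁ x * (1 - χ x))]
        · rw [Set.indicator_of_notMem (fun h3 => absurd (mem_Ioc.mp h3).2 (not_le.2 hx2))]
          rw [hgdef]
          simp only []
          rw [hχone x hx2.le]
          simp
      have hle := setIntegral_mono_on hint1 hint2 measurableSet_Ioi hptw
      have hright : ∫ x in Ioi (0:ℝ), (Ioc (0:ℝ) (2*δ)).indicator (fun _ => C'^2) x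
          = C'^2 * (2*δ) := by
        rw [setIntegral_indicator measurableSet_Ioc]
        have : Ioi (0:ℝ) ∩ Ioc (0:ℝ) (2*δ) = Ioc (0:ℝ) (2*δ) := by
          apply inter_eq_self_of_subset_right
          exact fun y hy => hy.1
        rw [this, setIntegral_const, smul_eq_mul, Real.volume_real_Ioc_of_le (by linarith)]
        ring
      have hδle : δ ≤ (ε/4)^2 / (2*(C'^2+1)) := min_le_right _ _
      calc ∫ x in Ioi (0:ℝ), (g₁ x - g x)^2 ≤ C'^2 * (2*δ) := by rw [← hright]; exact hle
        _ ≤ (ε/4)^2 := by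
            rw [le_div_iff₀ (by positivity)] at hδle
            nlinarith [sq_nonneg C', sq_nonneg (ε/4)]
    rw [h1]
    have h8 : (0:ℝ) ≤ ε/4 := by linarith
    nlinarith [norm_nonneg ((hg₁mu.sub hgmu).toLp (g₁ - g))]
  calc ‖F - hgmu.toLp g‖
      ≤ ‖F - hg₁mu.toLp g₁‖ + ‖(hg₁mu.toLp g₁ : Lp ℝ 2 mu) - hgmu.toLp g‖ := by
        have : F - hgmu.toLp g = (F - hg₁mu.toLp g₁) + ((hg₁mu.toLp g₁ : Lp ℝ 2 mu) - hgmu.toLp g) := by abel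
        rw [this]
        exact norm_add_le _ _
    _ ≤ ε/4 + ε/4 := add_le_add hterm1 hterm2
    _ < ε := by linarith

/-- Density of mean-zero tame functions. -/
lemma dense_tame_zero (F : Lp ℝ 2 mu) {ε : ℝ} (hε : 0 < ε) :
    ∃ (g : ℝ → ℝ) (hg : Tame g), phi g = 0 ∧ ‖F - hg.memLp.toLp g‖ < ε := by
  obtain ⟨g, htg, hclose⟩ := dense_tame F (show (0:ℝ) < ε/2 by linarith)
  set ψ : ℝ → ℝ := fun x => max 0 (1 - |x - 2|) with hψdef
  have hψcont : Continuous ψ := continuous_const.max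
    (continuous_const.sub (continuous_id.sub continuous_const).abs)
  have hψzero : ∀ x, x ∉ Ioo (1:ℝ) 3 → ψ x = 0 := by
    intro x hx
    apply max_eq_left
    rcases not_and_or.1 hx with h | h
    · push_neg at h
      have h2 : (1:ℝ) ≤ |x - 2| := by rw [abs_sub_comm, le_abs]; left; linarith
      linarith
    · push_neg at h
      have h2 : (1:ℝ) ≤ |x - 2| := by rw [le_abs]; left; linarith
      linarith
  have hψtame : Tame ψ := tame_of_zero_off hψcont one_pos hψzero
  have hψnonneg : ∀ x, 0 ≤ ψ x := fun x => le_max_left _ _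
  set κ : ℝ := phi ψ with hκdef
  have hκint : Integrable (fun y => ψ y / y) (volume.restrict (Ioi (0:ℝ))) :=
    hψtame.div_id.integrable
  have hκpos : 0 < κ := by
    have hsub : Ioc (3/2:ℝ) 2 ⊆ Ioi (0:ℝ) := fun y hy => lt_trans (by norm_num) hy.1
    have hnn : 0 ≤ᵐ[volume.restrict (Ioi (0:ℝ))] (fun y => ψ y / y) := by
      rw [Filter.EventuallyLE, ae_restrict_iff' measurableSet_Ioi]
      apply ae_of_all
      intro y hy
      exact div_nonneg (hψnonneg y) (le_of_lt hy)
    have h1 : ∫ y in Ioc (3/2:ℝ) 2, ψ y / y ≤ ∫ y in Ioi (0:ℝ), ψ y / y :=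
      setIntegral_mono_set hκint hnn (HasSubset.Subset.eventuallyLE hsub)
    have h2 : (1/4:ℝ) * (volume (Ioc (3/2:ℝ) 2)).toReal ≤ ∫ y in Ioc (3/2:ℝ) 2, ψ y / y := by
      refine Eq.trans_le (by rw [smul_eq_mul, mul_comm]; rfl) (setIntegral_ge_of_const_le (c := (1/4:ℝ)) measurableSet_Ioc (measure_Ioc_lt_top).ne ?_ ?_)
      · intro x hx
        have hx1 : (3/2:ℝ) < x := hx.1
        have hx2 : x ≤ 2 := hx.2
        have hψx : ψ x = 1 - |x - 2| := by
          apply max_eq_right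
          rw [abs_of_nonpos (by linarith)]
          linarith
        rw [hψx, abs_of_nonpos (by linarith), le_div_iff₀ (by linarith)]
        nlinarith
      · exact IntegrableOn.mono_set hκint hsub
    rw [Real.volume_Ioc, ENNReal.toReal_ofReal (by norm_num)] at h2
    rw [hκdef, phi]
    norm_num at h2
    linarith
  set t : ℝ := phi g with htdef
  set Kψ : ℝ := ∫ y in Ioi (0:ℝ), (ψ y)^2 with hKdef
  have hK0 : 0 ≤ Kψ := setIntegral_nonneg measurableSet_Ioi (fun y _ => sq_nonneg _)
  set δ : ℝ := min 1 ((ε/2)^2 * κ^2 / ((t^2 + 1) * (Kψ + 1))) with hδdef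
  have hδ0 : 0 < δ := lt_min one_pos (by positivity)
  set u : ℝ → ℝ := fun x => ψ (x/δ) with hudef
  have hucont : Continuous u := hψcont.comp (continuous_id.div_const δ)
  have huzero : ∀ x, x ∉ Ioo δ (3*δ) → u x = 0 := by
    intro x hx
    apply hψzero
    intro hmem
    apply hx
    constructor
    · have h3 := hmem.1
      rw [lt_div_iff₀ hδ0] at h3
      linarith
    · have h3 := hmem.2
      rw [div_lt_iff₀ hδ0] at h3
      linarith
  have hutame : Tame u := tame_of_zero_off hucont hδ0 huzero
  have hphiu : phi u = κ := by
    have h1 : ∫ x in Ioi (0:ℝ), (fun y => ψ y / y) (x/δ) = δ * κ := by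
      rw [hκdef]
      exact scale_int (fun y => ψ y / y) hδ0
    have h2 : ∀ x ∈ Ioi (0:ℝ), (fun y => ψ y / y) (x/δ) = δ * (ψ (x/δ) / x) := by
      intro x hx
      have hx0 : (0:ℝ) < x := hx
      simp only []
      rw [div_div_eq_mul_div]
      ring
    rw [setIntegral_congr_fun measurableSet_Ioi h2, MeasureTheory.integral_const_mul] at h1
    have h3 := mul_left_cancel₀ hδ0.ne' h1
    rw [hudef]
    exact h3
  have humem : MemLp u 2 mu := hutame.memLp
  have hnormu : ‖humem.toLp u‖^2 = δ * Kψ := by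
    rw [norm_toLp_sq, hudef, hKdef]
    exact scale_int (fun y => (ψ y)^2) hδ0
  set c : ℝ := -(t/κ) with hcdef
  have hg'tame : Tame (g + c • u) := htg.add (hutame.smul c)
  have hphi : phi (g + c • u) = 0 := by
    rw [phi_add_smul htg hutame c, hphiu, hcdef, ← htdef]
    field_simp
    ring
  refine ⟨g + c • u, hg'tame, hphi, ?_⟩
  have hsplit : (hg'tame.memLp.toLp (g + c • u) : Lp ℝ 2 mu)
      = htg.memLp.toLp g + c • humem.toLp u := by
    have h2 := MemLp.toLp_add htg.memLp (humem.const_smul c)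
    have h3 := MemLp.toLp_const_smul c humem
    calc (hg'tame.memLp.toLp (g + c • u) : Lp ℝ 2 mu)
        = (htg.memLp.add (humem.const_smul c)).toLp (g + c • u) := rfl
      _ = htg.memLp.toLp g + (humem.const_smul c).toLp (c • u) := h2
      _ = htg.memLp.toLp g + c • humem.toLp u := by rw [h3]
  have hbound : ‖c • humem.toLp u‖ < ε/2 := by
    rw [norm_smul]
    have h5 : δ ≤ (ε/2)^2 * κ^2 / ((t^2+1) * (Kψ+1)) := min_le_right _ _
    have h6 : ‖c‖ = |t| / κ := by
      rw [hcdef, Real.norm_eq_abs, abs_neg, abs_div, abs_of_pos hκpos]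
    have h7 : (‖c‖ * ‖humem.toLp u‖)^2 < (ε/2)^2 := by
      rw [mul_pow, h6, hnormu]
      rw [le_div_iff₀ (by positivity)] at h5
      have hkk : 0 < κ^2 := by positivity
      rw [div_pow, div_mul_eq_mul_div, div_lt_iff₀ hkk]
      rw [sq_abs]
      have hkey : t^2 * (δ * Kψ) < δ * ((t^2+1)*(Kψ+1)) := by
        nlinarith [hδ0, hK0, sq_nonneg t]
      linarith
    have h9 : 0 ≤ ‖c‖ * ‖humem.toLp u‖ := by positivity
    have h10 : (0:ℝ) < ε/2 := by linarith
    nlinarith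
  calc ‖F - hg'tame.memLp.toLp (g + c • u)‖
      = ‖(F - htg.memLp.toLp g) - c • humem.toLp u‖ := by
        rw [hsplit]
        congr 1
        abel
    _ ≤ ‖F - htg.memLp.toLp g‖ + ‖c • humem.toLp u‖ := norm_sub_le _ _
    _ < ε/2 + ε/2 := add_lt_add hclose hbound
    _ = ε := by ring

/-- Surjectivity input: every mean-zero tame function is in the image of `Sop`. -/
lemma top_surj_aux {g : ℝ → ℝ} (hg : Tame g) (h0 : phi g = 0) :
    ∃ f : ℝ → ℝ, Tame f ∧ Sop f =ᵐ[mu] g := by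
  obtain ⟨a, b, ha, hab, hsupp⟩ := tame_bounds hg
  have hb0 : 0 < b := ha.trans hab
  set w : ℝ → ℝ := fun y => g y / y with hw
  have hwzero : ∀ y, y ∉ Ioo a b → w y = 0 := fun y hy => by
    rw [hw]; simp only []; rw [hsupp y hy, zero_div]
  have hwcont : Continuous w := by
    rw [continuous_iff_continuousAt]
    intro x
    rcases lt_or_ge x a with hx | hx
    · apply continuousAt_const.congr
      apply Filter.eventuallyEq_of_mem (Iio_mem_nhds hx)
      intro y hy
      exact (hwzero y (fun h2 => absurd h2.1 (not_lt.2 (le_of_lt hy)))).symm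
    · have hx0 : 0 < x := lt_of_lt_of_le ha hx
      exact hg.1.continuousAt.div continuousAt_id hx0.ne'
  set c : ℝ → ℝ := fun x => ∫ t in x..b, w t with hc
  have hceq : c = fun u => -(∫ t in b..u, w t) := by
    funext u
    rw [hc]
    simp only []
    rw [intervalIntegral.integral_symm]
  have hcderiv : ∀ x, HasDerivAt c (-(w x)) x := by
    intro x
    rw [hceq]
    exact (intervalIntegral.integral_hasDerivAt_right (hwcont.intervalIntegrable _ _)
      (cont_smaf hwcont _) hwcont.continuousAt).neg
  have hccont : Continuous c := by
    rw [continuous_iff_continuousAt]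
    exact fun x => (hcderiv x).continuousAt
  have hzero_int : ∀ u v : ℝ, (∀ y ∈ uIcc u v, w y = 0) → (∫ t in u..v, w t) = 0 := by
    intro u v h
    rw [intervalIntegral.integral_congr (g := fun _ => (0:ℝ)) h]
    simp
  have hczero_ge : ∀ x, b ≤ x → c x = 0 := by
    intro x hx
    rw [hc]
    apply hzero_int
    intro y hy
    apply hwzero
    intro h2
    have h3 : min x b ≤ y := hy.1
    rw [min_eq_right hx] at h3
    exact absurd h2.2 (not_lt.2 h3)
  have hca : c a = phi g := by
    have hsplit : phi g = (∫ y in Ioc (0:ℝ) b, w y) + ∫ y in Ioi b, w y := by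
      have hwi : IntegrableOn w (Ioc 0 b) volume :=
        (hwcont.continuousOn.integrableOn_compact isCompact_Icc).mono_set Ioc_subset_Icc_self
      have hwi2 : IntegrableOn w (Ioi b) volume := by
        have heq : EqOn w (fun _ => (0:ℝ)) (Ioi b) := fun y hy =>
          hwzero y (fun h2 => absurd h2.2 (not_lt.2 (le_of_lt hy)))
        exact (integrableOn_congr_fun heq measurableSet_Ioi).2
          integrableOn_zero
      have hun := setIntegral_union (f := w) (μ := volume)
        (Ioc_disjoint_Ioi (le_refl b)) measurableSet_Ioi hwi hwi2
      rw [Ioc_union_Ioi_eq_Ioi hb0.le] at hun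
      rw [phi, ← hw]
      exact hun
    have h1 : ∫ y in Ioi b, w y = 0 := by
      rw [setIntegral_congr_fun measurableSet_Ioi
        (fun y hy => hwzero y (fun h2 => absurd h2.2 (not_lt.2 (le_of_lt hy))))]
      simp
    have h2 : ∫ y in Ioc (0:ℝ) b, w y = ∫ t in (0:ℝ)..b, w t :=
      (intervalIntegral.integral_of_le hb0.le).symm
    have h3 : (∫ t in (0:ℝ)..a, w t) + (∫ t in a..b, w t) = ∫ t in (0:ℝ)..b, w t :=
      intervalIntegral.integral_add_adjacent_intervals
        (hwcont.intervalIntegrable _ _) (hwcont.intervalIntegrable _ _)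
    have h4 : (∫ t in (0:ℝ)..a, w t) = 0 := by
      apply hzero_int
      intro y hy
      apply hwzero
      intro h2
      have h5 : y ≤ max 0 a := hy.2
      rw [max_eq_right ha.le] at h5
      exact absurd h2.1 (not_lt.2 h5)
    have h6 : phi g = ∫ t in a..b, w t := by linarith
    rw [h6, hc]
  have hczero_le : ∀ x, x ≤ a → c x = 0 := by
    intro x hx
    have h3 : (∫ t in x..a, w t) + (∫ t in a..b, w t) = ∫ t in x..b, w t :=
      intervalIntegral.integral_add_adjacent_intervals
        (hwcont.intervalIntegrable _ _) (hwcont.intervalIntegrable _ _)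
    have h4 : (∫ t in x..a, w t) = 0 := by
      apply hzero_int
      intro y hy
      apply hwzero
      intro h2
      have h5 : y ≤ max x a := hy.2
      rw [max_eq_right hx] at h5
      exact absurd h2.1 (not_lt.2 h5)
    have h6 : c x = c a := by
      have h7 : c x = ∫ t in x..b, w t := by rw [hc]
      have h8 : c a = ∫ t in a..b, w t := by rw [hc]
      rw [h7, h8, ← h3, h4, zero_add]
    rw [h6, hca, h0]
  set f : ℝ → ℝ := fun x => g x - c x with hfdef
  have hfzero : ∀ x, x ∉ Ioo a b → f x = 0 := by
    intro x hx
    rw [hfdef]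
    simp only []
    rw [hsupp x hx]
    rcases not_and_or.1 hx with h | h
    · rw [hczero_le x (le_of_not_gt h)]
      ring
    · rw [hczero_ge x (le_of_not_gt h)]
      ring
  have hfcont : Continuous f := hg.1.sub hccont
  have hftame : Tame f := by
    refine ⟨hfcont, HasCompactSupport.intro isCompact_Icc
      (fun x hx => hfzero x (fun h2 => hx ⟨h2.1.le, h2.2.le⟩)), ?_⟩
    have hsub : Function.support f ⊆ Icc a b := by
      intro x hx
      by_contra h2
      exact hx (hfzero x (fun h3 => h2 ⟨h3.1.le, h3.2.le⟩))
    exact (closure_minimal hsub isClosed_Icc).trans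
      (fun y hy => lt_of_lt_of_le ha hy.1)
  refine ⟨f, hftame, ?_⟩
  rw [Filter.EventuallyEq, mu, ae_restrict_iff' measurableSet_Ioi]
  apply ae_of_all
  intro x hx
  have hx0 : (0:ℝ) < x := hx
  have hf0 : ∀ t ≤ (0:ℝ), f t = 0 := fun t ht => hftame.zero_of_nonpos ht
  have hGder : ∀ t, HasDerivAt (fun u => -(u * c u)) (f t) t := by
    intro t
    have h1 : HasDerivAt (fun u => u * c u) (1 * c t + t * -(w t)) t :=
      (hasDerivAt_id t).mul (hcderiv t)
    have h2 := h1.neg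
    have h3 : t * w t = g t := by
      rcases eq_or_ne t 0 with rfl | ht
      · rw [hw]
        simp only []
        rw [div_zero, mul_zero]
        exact (hg.zero_of_nonpos le_rfl).symm
      · rw [hw]
        field_simp
    have h4 : -(1 * c t + t * -(w t)) = f t := by
      rw [hfdef]
      simp only []
      rw [← h3]
      ring
    rw [← h4]
    exact h2
  have hprim : prim f x = -(x * c x) := by
    rw [prim]
    rw [intervalIntegral.integral_eq_sub_of_hasDerivAt (fun t _ => hGder t)
      (hfcont.intervalIntegrable _ _)]
    simp
  rw [Sop, prim_eq_Ioo hf0, hprim, hfdef]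
  simp only []
  field_simp
  ring

----------------------------------------------------------------
-- Assembly

noncomputable def V : Submodule ℝ (Lp ℝ 2 mu) where
  carrier := {F | ∃ f : ℝ → ℝ, ∃ ht : Tame f, F = ht.memLp.toLp f}
  zero_mem' := ⟨0, tame_zero, (MemLp.toLp_zero _).symm⟩
  add_mem' := by
    rintro a b ⟨f, hf, rfl⟩ ⟨g, hg, rfl⟩
    exact ⟨f + g, hf.add hg, (MemLp.toLp_add hf.memLp hg.memLp).symm⟩
  smul_mem' := by
    rintro c a ⟨f, hf, rfl⟩
    exact ⟨c • f, hf.smul c, (MemLp.toLp_const_smul c hf.memLp).symm⟩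

noncomputable def vrep (v : V) : ℝ → ℝ := v.2.choose
lemma vrep_tame (v : V) : Tame (vrep v) := v.2.choose_spec.choose
lemma vrep_eq (v : V) : (v : Lp ℝ 2 mu) = (vrep_tame v).memLp.toLp (vrep v) :=
  v.2.choose_spec.choose_spec

noncomputable def T0fun (v : V) : Lp ℝ 2 mu :=
  ((vrep_tame v).memTop).toLp (Sop (vrep v))

lemma T0fun_eq {f : ℝ → ℝ} (ht : Tame f) (v : V)
    (hv : (v : Lp ℝ 2 mu) = ht.memLp.toLp f) : T0fun v = (ht.memTop).toLp (Sop f) := by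
  have hrep : vrep v = f := by
    apply tame_toLp_inj (vrep_tame v) ht
    have h1 : ((vrep_tame v).memLp.toLp (vrep v) : Lp ℝ 2 mu) = ht.memLp.toLp f :=
      (vrep_eq v).symm.trans hv
    calc vrep v =ᵐ[mu] ((vrep_tame v).memLp.toLp (vrep v) : ℝ → ℝ) :=
          (MemLp.coeFn_toLp _).symm
      _ =ᵐ[mu] f := by rw [h1]; exact MemLp.coeFn_toLp _
  subst hrep
  rfl

lemma T0fun_add (u v : V) : T0fun (u + v) = T0fun u + T0fun v := by
  have htu := vrep_tame u
  have htv := vrep_tame v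
  have htuv : Tame (vrep u + vrep v) := htu.add htv
  have h1 : T0fun (u + v) = htuv.memTop.toLp (Sop (vrep u + vrep v)) := by
    apply T0fun_eq htuv
    show (u : Lp ℝ 2 mu) + v = _
    rw [vrep_eq u, vrep_eq v, ← MemLp.toLp_add]
  rw [h1]
  show _ = ((vrep_tame u).memTop).toLp (Sop (vrep u)) + ((vrep_tame v).memTop).toLp (Sop (vrep v))
  rw [← MemLp.toLp_add (htu.memTop) (htv.memTop)]
  exact MemLp.toLp_congr _ _ (by rw [Sop_add htu htv])

lemma T0fun_smul (c : ℝ) (v : V) : T0fun (c • v) = c • T0fun v := by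
  have htv := vrep_tame v
  have htcv : Tame (c • vrep v) := htv.smul c
  have h1 : T0fun (c • v) = htcv.memTop.toLp (Sop (c • vrep v)) := by
    apply T0fun_eq htcv
    show c • (v : Lp ℝ 2 mu) = _
    rw [vrep_eq v, ← MemLp.toLp_const_smul]
  rw [h1]
  show _ = c • ((vrep_tame v).memTop).toLp (Sop (vrep v))
  rw [← MemLp.toLp_const_smul c (htv.memTop)]
  exact MemLp.toLp_congr _ _ (by rw [Sop_smul c htv])

noncomputable def T0 : V →ₗ[ℝ] Lp ℝ 2 mu where
  toFun := T0fun
  map_add' := T0fun_add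
  map_smul' := T0fun_smul

lemma T0_norm (v : V) : ‖T0 v‖ = ‖v‖ := by
  have htv := vrep_tame v
  have h1 : ‖T0 v‖^2 = ‖v‖^2 := by
    show ‖(htv.memTop).toLp (Sop (vrep v))‖^2 = ‖(v : Lp ℝ 2 mu)‖^2
    rw [vrep_eq v, norm_toLp_sq, norm_toLp_sq, top_isometry htv]
  have h2 : (0:ℝ) ≤ ‖T0 v‖ := norm_nonneg _
  have h3 : (0:ℝ) ≤ ‖v‖ := norm_nonneg _
  nlinarith

noncomputable def T0L : V →L[ℝ] Lp ℝ 2 mu :=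
  T0.mkContinuous 1 (fun v => by rw [T0_norm]; simp)

lemma denseV : DenseRange (⇑(V.subtypeL)) := by
  have : Dense (V : Set (Lp ℝ 2 mu)) := by
    rw [Metric.dense_iff]
    intro F r hr
    obtain ⟨g, hg, _, hlt⟩ := dense_tame_zero F hr
    exact ⟨hg.memLp.toLp g, by rwa [Metric.mem_ball, dist_comm, dist_eq_norm],
      ⟨g, hg, rfl⟩⟩
  show Dense (Set.range _)
  have : Set.range (⇑(V.subtypeL)) = (V : Set (Lp ℝ 2 mu)) := Subtype.range_coe
  rw [this]
  exact ‹Dense _›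

noncomputable def U0 : Lp ℝ 2 mu →L[ℝ] Lp ℝ 2 mu :=
  T0L.extend V.subtypeL

lemma U0_eval {f : ℝ → ℝ} (ht : Tame f) :
    U0 (ht.memLp.toLp f) = (ht.memTop).toLp (Sop f) := by
  have hmem : ht.memLp.toLp f ∈ V := ⟨f, ht, rfl⟩
  have : ht.memLp.toLp f = V.subtypeL ⟨_, hmem⟩ := rfl
  rw [this, U0, ContinuousLinearMap.extend_eq _ denseV V.subtypeₗᵢ.isometry.isUniformInducing]
  show T0fun _ = _
  exact T0fun_eq ht _ rfl

lemma U0_norm (F : Lp ℝ 2 mu) : ‖U0 F‖ = ‖F‖ := by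
  refine denseV.induction_on F (isClosed_eq (continuous_norm.comp U0.continuous)
    continuous_norm) (fun v => ?_)
  rw [U0, ContinuousLinearMap.extend_eq _ denseV V.subtypeₗᵢ.isometry.isUniformInducing]
  show ‖T0 v‖ = ‖(v : Lp ℝ 2 mu)‖
  rw [T0_norm]
  rfl

noncomputable def TIso : Lp ℝ 2 mu →ₗᵢ[ℝ] Lp ℝ 2 mu :=
  ⟨U0.toLinearMap, U0_norm⟩

lemma TIso_surj : Function.Surjective TIso := by
  have hclosed : IsClosed (Set.range ⇑TIso) :=
    TIso.isometry.isClosedEmbedding.isClosed_range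
  intro F
  have hmem : F ∈ closure (Set.range ⇑TIso) := by
    rw [Metric.mem_closure_iff]
    intro ε hε
    obtain ⟨g, htg, h0, hlt⟩ := dense_tame_zero F hε
    obtain ⟨f, htf, hae⟩ := top_surj_aux htg h0
    refine ⟨htg.memLp.toLp g, ⟨htf.memLp.toLp f, ?_⟩, by rwa [dist_eq_norm]⟩
    show U0 _ = _
    rw [U0_eval htf]
    exact MemLp.toLp_congr _ _ hae
  rwa [hclosed.closure_eq] at hmem

/-- The shifted Hardy operator `I - H₁`, `H₁ f x = (1/x) ∫₀ˣ f`, is unitary on `L²(0,∞)`. -/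
theorem shifted_hardy_unitary :
    ∃ U : Lp ℝ 2 mu ≃ₗᵢ[ℝ] Lp ℝ 2 mu,
      ∀ (f : ℝ → ℝ), Nice f →
        ∀ (hf : MemLp f 2 mu)
          (hg : MemLp (fun x => f x - (1/x) * ∫ y in Ioo 0 x, f y) 2 mu),
          U (hf.toLp f) = hg.toLp _ := by
  refine ⟨LinearIsometryEquiv.ofSurjective TIso TIso_surj, fun f hn hf hg => ?_⟩
  have h1 : (LinearIsometryEquiv.ofSurjective TIso TIso_surj) (hf.toLp f)
      = TIso (hf.toLp f) := by
    rw [LinearIsometryEquiv.coe_ofSurjective]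
  rw [h1]
  show U0 (hf.toLp f) = _
  have h2 : hf.toLp f = (hn.tame.memLp).toLp f := rfl
  rw [h2, U0_eval hn.tame]
  rfl
end

section
/- The operators I - H₁ and I - H₂ on L²(0,∞) are mutually inverse: (I - H₁)(I - H₂) = I and (I - H₂)(I - H₁) = I. -/
open MeasureTheory Set

/-- `(I - H₂)(I - H₁) = I` and `(I - H₁)(I - H₂) = I` pointwise on `(0,∞)`. -/
theorem shifted_hardy_mutually_inverse (f : ℝ → ℝ) (hf : Nice f) :
    (∀ x ∈ Ioi (0:ℝ),
      (fun z => f z - (1/z) * ∫ y in Ioo 0 z, f y) x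
        - ∫ y in Ioi x, (f y - (1/y) * ∫ t in Ioo 0 y, f t) / y = f x) ∧
    (∀ x ∈ Ioi (0:ℝ),
      (fun z => f z - ∫ y in Ioi z, f y / y) x
        - (1/x) * ∫ y in Ioo 0 x, (f y - ∫ t in Ioi y, f t / t) = f x) := by
  obtain ⟨hsmooth, hsupp, hpos⟩ := hf
  have hcont : Continuous f := hsmooth.continuous
  have hf_int : Integrable f := hcont.integrable_of_hasCompactSupport hsupp
  -- f vanishes below some a > 0
  obtain ⟨a, ha0, hfa⟩ : ∃ a > (0:ℝ), ∀ y < a, f y = 0 := by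
    rcases eq_empty_or_nonempty (tsupport f) with he | hne
    · exact ⟨1, one_pos, fun y _ => image_eq_zero_of_notMem_tsupport (by simp [he])⟩
    · refine ⟨sInf (tsupport f), hpos (hsupp.sInf_mem hne), fun y hy => ?_⟩
      refine image_eq_zero_of_notMem_tsupport fun hy' => ?_
      exact absurd (csInf_le hsupp.isCompact.bddBelow hy') (not_le.mpr hy)
  -- f vanishes above some B
  obtain ⟨B, hB⟩ : ∃ B : ℝ, ∀ y, B ≤ y → f y = 0 := by
    obtain ⟨B0, hB0⟩ := hsupp.isCompact.bddAbove
    refine ⟨B0 + 1, fun y hy => image_eq_zero_of_notMem_tsupport fun hy' => ?_⟩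
    linarith [hB0 hy']
  have hf0 : f 0 = 0 := hfa 0 ha0
  -- the function h y = f y / y
  set h : ℝ → ℝ := fun y => f y / y with hh_def
  have hh : Continuous h := by
    rw [continuous_iff_continuousAt]
    intro y
    rcases ne_or_eq y 0 with hy | rfl
    · exact hcont.continuousAt.div continuousAt_id hy
    · have hev : (fun z => (0:ℝ)) =ᶠ[nhds (0:ℝ)] h := by
        filter_upwards [Iio_mem_nhds ha0] with z hz
        simp [hh_def, hfa z hz]
      exact continuousAt_const.congr hev
  have hh_supp : HasCompactSupport h :=
    hsupp.mono (fun y hy => by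
      simp only [Function.mem_support, hh_def] at hy ⊢
      intro h0; exact hy (by simp [h0]))
  have hh_int : Integrable h := hh.integrable_of_hasCompactSupport hh_supp
  have yh : ∀ y : ℝ, y * h y = f y := by
    intro y
    rcases eq_or_ne y 0 with rfl | hy
    · simp [hf0]
    · simp only [hh_def]
      field_simp
  -- the primitive F'
  set F' : ℝ → ℝ := fun y => ∫ t in (0:ℝ)..y, f t with hF'_def
  have hF'd : ∀ y : ℝ, HasDerivAt F' (f y) y := fun y =>
    intervalIntegral.integral_hasDerivAt_right hf_int.intervalIntegrable
      hcont.stronglyMeasurable.stronglyMeasurableAtFilter hcont.continuousAt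
  have hF'cont : Continuous F' :=
    continuous_iff_continuousAt.mpr fun y => (hF'd y).continuousAt
  have hFF' : ∀ y : ℝ, 0 < y → (∫ t in Ioo 0 y, f t) = F' y := by
    intro y hy
    show (∫ t in Ioo 0 y, f t) = ∫ t in (0:ℝ)..y, f t
    rw [intervalIntegral.integral_of_le hy.le, integral_Ioc_eq_integral_Ioo]
  have hF'B : ∀ y : ℝ, B ≤ y → F' y = F' B := by
    intro y hy
    have hadd : (∫ t in (0:ℝ)..B, f t) + ∫ t in B..y, f t = ∫ t in (0:ℝ)..y, f t :=
      intervalIntegral.integral_add_adjacent_intervals hf_int.intervalIntegrable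
        hf_int.intervalIntegrable
    have hzero : (∫ t in B..y, f t) = 0 := by
      rw [intervalIntegral.integral_congr (g := fun _ => (0:ℝ))
        (fun z hz => hB z (by rw [uIcc_of_le hy] at hz; exact hz.1))]
      simp
    rw [hF'_def]
    simp only []
    rw [← hadd, hzero, add_zero]
  set M : ℝ := ∫ t, |f t| with hM_def
  have hM : ∀ y : ℝ, 0 < y → |F' y| ≤ M := by
    intro y hy
    show |∫ t in (0:ℝ)..y, f t| ≤ M
    rw [intervalIntegral.integral_of_le hy.le]
    calc |∫ t in Ioc (0:ℝ) y, f t| ≤ ∫ t in Ioc (0:ℝ) y, |f t| := by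
          simpa [Real.norm_eq_abs] using
            norm_integral_le_integral_norm (μ := volume.restrict (Ioc (0:ℝ) y)) f
      _ ≤ ∫ t, |f t| := setIntegral_le_integral hf_int.abs
          (Filter.Eventually.of_forall fun t => abs_nonneg _)
  -- the function G
  set G : ℝ → ℝ := fun y => ∫ t in Ioi y, f t / t with hG_def
  have hGB : ∀ y : ℝ, G y = ∫ t in y..B, h t := by
    intro y
    have hIoiB : (∫ t in Ioi B, h t) = 0 :=
      setIntegral_eq_zero_of_forall_eq_zero
        (fun t ht => by simp [hh_def, hB t (le_of_lt ht)])
    rcases le_or_gt y B with hy | hy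
    · show (∫ t in Ioi y, f t / t) = ∫ t in y..B, h t
      rw [← Ioc_union_Ioi_eq_Ioi hy,
        setIntegral_union (Ioc_disjoint_Ioi le_rfl) measurableSet_Ioi
          hh_int.integrableOn hh_int.integrableOn,
        hIoiB, add_zero, intervalIntegral.integral_of_le hy]
    · show (∫ t in Ioi y, f t / t) = ∫ t in y..B, h t
      rw [setIntegral_eq_zero_of_forall_eq_zero
          (fun t ht => by simp [hh_def, hB t (le_of_lt (hy.trans ht))]),
        intervalIntegral.integral_symm,
        intervalIntegral.integral_of_le hy.le,
        setIntegral_eq_zero_of_forall_eq_zero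
          (fun t ht => by simp [hh_def, hB t (le_of_lt ht.1)])]
      simp
  set P : ℝ → ℝ := fun y => ∫ t in (0:ℝ)..y, h t with hP_def
  have hPd : ∀ y : ℝ, HasDerivAt P (h y) y := fun y =>
    intervalIntegral.integral_hasDerivAt_right hh_int.intervalIntegrable
      hh.stronglyMeasurable.stronglyMeasurableAtFilter hh.continuousAt
  have hGP : ∀ y : ℝ, G y = P B - P y := by
    intro y
    rw [hGB y, hP_def]
    have := intervalIntegral.integral_add_adjacent_intervals
      (a := (0:ℝ)) (b := y) (c := B)
      hh_int.intervalIntegrable hh_int.intervalIntegrable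
    simp only []
    linarith [this]
  have hGd : ∀ y : ℝ, HasDerivAt G (-(h y)) y := by
    intro y
    have : HasDerivAt (fun y => P B - P y) (-(h y)) y := (hPd y).const_sub (P B)
    exact this.congr_of_eventuallyEq (Filter.Eventually.of_forall fun z => (hGP z))
  have hGcont : Continuous G := continuous_iff_continuousAt.mpr fun y => (hGd y).continuousAt
  constructor
  · -- Part 1 : (I - H₂)(I - H₁) = I
    intro x hx
    have hx0 : (0:ℝ) < x := hx
    have key : (∫ y in Ioi x, (f y - (1/y) * ∫ t in Ioo 0 y, f t) / y)
        = 0 - F' x / x := by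
      apply integral_Ioi_of_hasDerivAt_of_tendsto
        (f := fun y => F' y / y)
      · exact ((hF'cont.continuousAt.div continuousAt_id hx0.ne')).continuousWithinAt
      · intro y hy
        have hy0 : (0:ℝ) < y := hx0.trans hy
        have hd : HasDerivAt (fun y => F' y / y)
            ((f y * y - F' y * 1) / y ^ 2) y :=
          (hF'd y).div (hasDerivAt_id y) hy0.ne'
        refine hd.congr_deriv (Eq.symm ?_)
        rw [hFF' y hy0, mul_one, div_eq_div_iff hy0.ne' (pow_ne_zero 2 hy0.ne')]
        field_simp
        all_goals ring
      · -- integrability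
        have int2 : IntegrableOn (fun y => F' y / y ^ 2) (Ioi x) := by
          apply Integrable.mono'
            (g := fun y => M * y ^ (-2:ℝ))
          · exact (integrableOn_Ioi_rpow_of_lt (by norm_num) hx0).const_mul M
          · exact ((hF'cont.continuousOn).div
              (continuousOn_pow 2)
              (fun y hy => pow_ne_zero 2 (hx0.trans hy).ne')).aestronglyMeasurable
              measurableSet_Ioi
          · rw [ae_restrict_iff' measurableSet_Ioi]
            refine Filter.Eventually.of_forall fun y hy => ?_
            have hy0 : (0:ℝ) < y := hx0.trans hy
            have hrw : y ^ (-2:ℝ) = (y ^ 2)⁻¹ := by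
              rw [Real.rpow_neg hy0.le]
              norm_num
            rw [hrw, Real.norm_eq_abs, abs_div, div_eq_mul_inv, abs_pow, sq_abs]
            exact mul_le_mul_of_nonneg_right (hM y hy0) (by positivity)
        have heq : EqOn (fun y => h y - F' y / y ^ 2)
            (fun y => (f y - (1/y) * ∫ t in Ioo 0 y, f t) / y) (Ioi x) := by
          intro y hy
          have hy0 : (0:ℝ) < y := hx0.trans hy
          simp only [hh_def]
          rw [hFF' y hy0]
          field_simp
          all_goals ring
        exact IntegrableOn.congr_fun
          (((hh_int.integrableOn).sub int2 :
            IntegrableOn (fun y => h y - F' y / y ^ 2) (Ioi x) volume))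
          heq measurableSet_Ioi
      · -- tendsto 0
        have h1 : Filter.Tendsto (fun y : ℝ => F' B * y⁻¹) Filter.atTop (nhds 0) := by
          simpa using tendsto_inv_atTop_zero.const_mul (F' B)
        apply h1.congr'
        filter_upwards [Filter.Ici_mem_atTop B] with y hy
        rw [hF'B y hy, div_eq_mul_inv]
    show f x - (1/x) * (∫ y in Ioo 0 x, f y)
        - (∫ y in Ioi x, (f y - (1/y) * ∫ t in Ioo 0 y, f t) / y) = f x
    rw [key, hFF' x hx0]
    field_simp
    ring
  · -- Part 2 : (I - H₁)(I - H₂) = I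
    intro x hx
    have hx0 : (0:ℝ) < x := hx
    have hgd : ∀ y : ℝ, HasDerivAt (fun y => -(y * G y)) (f y - G y) y := by
      intro y
      have hd : HasDerivAt (fun y => y * G y) (1 * G y + y * -(h y)) y :=
        (hasDerivAt_id y).mul (hGd y)
      have := hd.neg
      refine this.congr_deriv (Eq.symm ?_)
      rw [one_mul, mul_neg, yh y]
      ring
    have key : (∫ y in (0:ℝ)..x, (f y - G y)) = -(x * G x) - -(0 * G 0) :=
      intervalIntegral.integral_eq_sub_of_hasDerivAt (fun y _ => hgd y)
        ((hcont.sub hGcont).intervalIntegrable 0 x)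
    have hIoo : (∫ y in Ioo (0:ℝ) x, (f y - G y)) = -(x * G x) := by
      rw [← integral_Ioc_eq_integral_Ioo, ← intervalIntegral.integral_of_le hx0.le, key]
      ring
    simp only [hG_def, hh_def] at hIoo ⊢
    rw [hIoo]
    field_simp
    ring
end
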